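/- Under the hypotheses of the U(1) × U(n−1) reduction (TM = L ⊕ E, F|_E = (k/4)Id), the Ricci tensor of g has exactly two eigenvalues: k(n+7)/8 on L and k(n+2)/4 on E. -/

import Mathlib

/-!
An alternating `A` that anticommutes with `J` vanishes on any `J`-stable plane, which is spanned
by `v, J v`; so `A = 0` on `L × L`, and strictness forces `L ≠ TM`, i.e. `n ≥ 2`. Consequently
`r^L` pairs to zero with `L`, while on `E` it is `2F = (k/2)·Id`. Since `r^L + r^E = r`, both
partial traces are scalar on each summand, hence so is the Ricci formula; across the summands
`Ric` vanishes by hypothesis and symmetry.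
-/

open RealInnerProductSpace

section ComplexStructure

variable {K V : Type*} [Field K] [LinearOrder K] [IsStrictOrderedRing K]
  [AddCommGroup V] [Module K V] {J : V →ₗ[K] V}

theorem linearIndependent_pair_apply_of_apply_apply_eq_neg (hJJ : ∀ x, J (J x) = -x)
    {v : V} (hv : v ≠ 0) : LinearIndependent K ![v, J v] := by
  refine (LinearIndependent.pair_iff' hv).2 fun a ha => hv ?_
  have : (a * a + 1) • v = 0 := by
    rw [add_smul, mul_smul, ha, ← map_smul, ha, hJJ, one_smul, neg_add_cancel]
  exact (smul_eq_zero.1 this).resolve_left (add_pos_of_nonneg_of_pos (mul_self_nonneg a) one_pos).ne'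

theorem span_pair_apply_eq_of_finrank_eq_two (hJJ : ∀ x, J (J x) = -x)
    {W : Submodule K V} (hJW : ∀ w ∈ W, J w ∈ W) (hW : Module.finrank K W = 2)
    {v : V} (hv : v ∈ W) (hv0 : v ≠ 0) : Submodule.span K (Set.range ![v, J v]) = W := by
  have : FiniteDimensional K W := Module.finite_of_finrank_pos (by omega)
  refine Submodule.eq_of_le_of_finrank_le ?_ ?_
  · rw [Submodule.span_le, Set.range_subset_iff]
    intro i
    fin_cases i
    exacts [hv, hJW v hv]
  · rw [hW, finrank_span_eq_card (linearIndependent_pair_apply_of_apply_apply_eq_neg hJJ hv0)]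
    simp

theorem apply_eq_zero_of_mem_of_finrank_eq_two {A : V →ₗ[K] V →ₗ[K] V} (hA : A.IsAlt)
    (hAJ : ∀ x y, A x (J y) = -J (A x y)) (hJJ : ∀ x, J (J x) = -x)
    {W : Submodule K V} (hJW : ∀ w ∈ W, J w ∈ W) (hW : Module.finrank K W = 2)
    {v w : V} (hv : v ∈ W) (hw : w ∈ W) : A v w = 0 := by
  rcases eq_or_ne v 0 with rfl | hv0
  · simp
  rw [← span_pair_apply_eq_of_finrank_eq_two hJJ hJW hW hv hv0,
    Submodule.mem_span_range_iff_exists_fun] at hw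
  obtain ⟨c, rfl⟩ := hw
  simp [Fin.sum_univ_two, hAJ, hA.self_eq_zero]

end ComplexStructure

theorem two_lt_finrank_of_apply_eq_zero {K V : Type*} [Field K] [AddCommGroup V] [Module K V]
    [FiniteDimensional K V] {A : V →ₗ[K] V →ₗ[K] V} (hstrict : ∀ x, x ≠ 0 → ∃ y, A x y ≠ 0)
    {W : Submodule K V} (hW : Module.finrank K W = 2) (hAW : ∀ v ∈ W, ∀ w ∈ W, A v w = 0) :
    2 < Module.finrank K V := by
  refine lt_of_le_of_ne (hW ▸ Submodule.finrank_le W) fun h => ?_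
  have hWtop : W = ⊤ := Submodule.eq_top_of_finrank_eq (hW.trans h)
  have hWbot : W ≠ ⊥ := by
    rintro rfl
    simp at hW
  obtain ⟨v, hv, hv0⟩ := Submodule.exists_mem_ne_zero_of_ne_bot hWbot
  obtain ⟨y, hy⟩ := hstrict v hv0
  exact hy (hAW v hv y (hWtop ▸ Submodule.mem_top))

section FrameSums

variable {ι V : Type*} [Fintype ι] [NormedAddCommGroup V] [InnerProductSpace ℝ V]
  {A : V →ₗ[ℝ] V →ₗ[ℝ] V} {b : ι → V} {p : ι → Prop} [DecidablePred p]

theorem inner_apply_apply_self_eq_neg (hA : A.IsAlt)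
    (hAskew : ∀ x y z, ⟪A x y, z⟫ = -⟪A x z, y⟫) (x y z : V) :
    ⟪A x (A y z), z⟫ = -⟪A z x, A z y⟫ := by
  rw [hAskew, ← hA.neg z x, ← hA.neg z y, inner_neg_neg]

theorem neg_sum_filter_add_neg_sum_filter_not (hA : A.IsAlt)
    (hAskew : ∀ x y z, ⟪A x y, z⟫ = -⟪A x z, y⟫) (x y : V) :
    -∑ i ∈ Finset.univ.filter p, ⟪A x (A y (b i)), b i⟫
      + -∑ i ∈ Finset.univ.filter (fun i => ¬ p i), ⟪A x (A y (b i)), b i⟫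
      = ∑ i, ⟪A (b i) x, A (b i) y⟫ := by
  rw [← neg_add, Finset.sum_filter_add_sum_filter_not, ← Finset.sum_neg_distrib]
  simp only [inner_apply_apply_self_eq_neg hA hAskew, neg_neg]

theorem sum_filter_inner_apply_apply_eq_zero {W : Submodule ℝ V}
    (hAW : ∀ v ∈ W, ∀ w ∈ W, A v w = 0) (hb : ∀ i, p i → b i ∈ W) (x : V) {w : V}
    (hw : w ∈ W) : ∑ i ∈ Finset.univ.filter p, ⟪A x (A w (b i)), b i⟫ = 0 :=
  Finset.sum_eq_zero fun i hi => by
    rw [hAW w hw (b i) (hb i (Finset.mem_filter.1 hi).2), map_zero, inner_zero_left]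

end FrameSums

theorem eq_of_inner_eq_of_sup_eq_top {𝕜 V : Type*} [RCLike 𝕜] [NormedAddCommGroup V]
    [InnerProductSpace 𝕜 V] {L E : Submodule 𝕜 V} (hLE : L ⊔ E = ⊤) {u u' : V}
    (hL : ∀ w ∈ L, inner 𝕜 u w = inner 𝕜 u' w) (hE : ∀ w ∈ E, inner 𝕜 u w = inner 𝕜 u' w) :
    u = u' := by
  refine ext_inner_right 𝕜 fun w => ?_
  obtain ⟨a, ha, e, he, rfl⟩ := Submodule.mem_sup.1 (hLE ▸ Submodule.mem_top : w ∈ L ⊔ E)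
  rw [inner_add_right, inner_add_right, hL a ha, hE e he]

theorem reducibleNK_Ricci_eigenvalues_general
    (V : Type) [NormedAddCommGroup V] [InnerProductSpace ℝ V]
    [FiniteDimensional ℝ V]
    (n : ℕ) (hdim : Module.finrank ℝ V = 2 * n)
    (b : OrthonormalBasis (Fin (2 * n)) ℝ V)
    (J : V →ₗ[ℝ] V)
    (A : V →ₗ[ℝ] V →ₗ[ℝ] V)
    (r F Ric : V →ₗ[ℝ] V)
    (L E : Submodule ℝ V)
    -- almost Hermitian structure, strict nearly Kähler condition
    (hJJ : ∀ x, J (J x) = -x)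
    (hNK : ∀ x, A x x = 0)
    (hstrict : ∀ x, x ≠ 0 → ∃ y, A x y ≠ 0)
    (hAskew : ∀ x y z, ⟪A x y, z⟫ = -⟪A x z, y⟫)
    (hAJ : ∀ x y, A x (J y) = -J (A x y))
    -- the splitting TM = L ⊕ E : orthogonal, J-stable, rank L = 2
    (hcompl : IsCompl L E)
    (horth : ∀ v ∈ L, ∀ x ∈ E, ⟪v, x⟫ = 0)
    (hJL : ∀ v ∈ L, J v ∈ L)
    (hrankL : Module.finrank ℝ L = 2)
    -- the frame is adapted to the splitting
    (inL : Fin (2 * n) → Prop) [DecidablePred inL]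
    (hadapt : ∀ i, if inL i then b i ∈ L else b i ∈ E)
    -- definition of r and F, structural facts from Proposition 4.1
    (hr : ∀ x y, ⟪r x, y⟫ = ∑ i, ⟪A (b i) x, A (b i) y⟫)
    (hF : ∀ x y, ⟪F x, y⟫
      = -(1/2 : ℝ) * ∑ i ∈ Finset.univ.filter inL, ⟪A x (A y (b i)), b i⟫)
    (k : ℝ) (hk : 0 < k)
    (hFE : ∀ x ∈ E, F x = (k / 4) • x)
    -- the eigenvalues of r on L and E
    (hrL : ∀ v ∈ L, r v = (k * (n - 1) / 2) • v)
    (hrE : ∀ x ∈ E, r x = k • x)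
    -- the partial trace tensors r^L and r^E
    (rL rE : V →ₗ[ℝ] V)
    (hrsL : ∀ x y, ⟪rL x, y⟫
      = -∑ i ∈ Finset.univ.filter inL, ⟪A x (A y (b i)), b i⟫)
    (hrsE : ∀ x y, ⟪rE x, y⟫
      = -∑ i ∈ Finset.univ.filter (fun i => ¬ inL i), ⟪A x (A y (b i)), b i⟫)
    -- the Ricci formula on each eigenbundle of r, and vanishing across them
    (hRicL : ∀ x ∈ L, ∀ y ∈ L,
      ⟪Ric x, y⟫ = (k * (n - 1) / 2) / 4 * ⟪x, y⟫
        + (1 / (k * (n - 1) / 2)) *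
            ((k * (n - 1) / 2) * ⟪rL x, y⟫ + k * ⟪rE x, y⟫))
    (hRicE : ∀ x ∈ E, ∀ y ∈ E,
      ⟪Ric x, y⟫ = k / 4 * ⟪x, y⟫
        + (1 / k) * ((k * (n - 1) / 2) * ⟪rL x, y⟫ + k * ⟪rE x, y⟫))
    (hRic0 : ∀ x ∈ L, ∀ y ∈ E, ⟪Ric x, y⟫ = 0)
    (hRicsymm : ∀ x y, ⟪Ric x, y⟫ = ⟪x, Ric y⟫) :
    (∀ v ∈ L, Ric v = (k * (n + 7) / 8) • v)
    ∧ (∀ x ∈ E, Ric x = (k * (n + 2) / 4) • x) := by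
  have hALL : ∀ v ∈ L, ∀ w ∈ L, A v w = 0 := fun v hv w hw =>
    apply_eq_zero_of_mem_of_finrank_eq_two hNK hAJ hJJ hJL hrankL hv hw
  have hn : (2 : ℝ) ≤ n := by
    have := two_lt_finrank_of_apply_eq_zero hstrict hrankL hALL
    exact_mod_cast (by omega : 2 ≤ n)
  have hbL : ∀ i, inL i → b i ∈ L := fun i hi => by simpa [hi] using hadapt i
  have hrL_L : ∀ x, ∀ w ∈ L, ⟪rL x, w⟫ = 0 := fun x w hw => by
    rw [hrsL, sum_filter_inner_apply_apply_eq_zero hALL hbL x hw, neg_zero]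
  have hrL_E : ∀ x ∈ E, ∀ y, ⟪rL x, y⟫ = k / 2 * ⟪x, y⟫ := fun x hx y => by
    have := hF x y
    rw [hFE x hx, real_inner_smul_left] at this
    linarith [hrsL x y]
  have hsplit : ∀ x y, ⟪rL x, y⟫ + ⟪rE x, y⟫ = ⟪r x, y⟫ := fun x y => by
    rw [hrsL, hrsE, hr, neg_sum_filter_add_neg_sum_filter_not hNK hAskew]
  constructor
  · intro v hv
    refine eq_of_inner_eq_of_sup_eq_top hcompl.sup_eq_top (fun w hw => ?_) (fun e he => ?_)
    · have hrE_L : ⟪rE v, w⟫ = k * (n - 1) / 2 * ⟪v, w⟫ := by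
        rw [← zero_add ⟪rE v, w⟫, ← hrL_L v w hw, hsplit, hrL v hv, real_inner_smul_left]
      have hn1 : (n : ℝ) - 1 ≠ 0 := by linarith
      rw [hRicL v hv w hw, hrL_L v w hw, hrE_L, real_inner_smul_left]
      field_simp [hk.ne']
      ring
    · rw [hRic0 v hv e he, real_inner_smul_left, horth v hv e he, mul_zero]
  · intro x hx
    refine eq_of_inner_eq_of_sup_eq_top hcompl.sup_eq_top (fun w hw => ?_) (fun e he => ?_)
    · rw [hRicsymm, real_inner_comm, hRic0 w hw x hx, real_inner_smul_left, real_inner_comm,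
        horth w hw x hx, mul_zero]
    · have hrE_E : ⟪rE x, e⟫ = k / 2 * ⟪x, e⟫ := by
        rw [eq_sub_of_add_eq' (hsplit x e), hrE x hx, real_inner_smul_left, hrL_E x hx e]
        ring
      rw [hRicE x hx e he, hrL_E x hx e, hrE_E, real_inner_smul_left]
      field_simp
      ring

theorem reducibleNK_Ricci_eigenvalues
    (V : Type) [NormedAddCommGroup V] [InnerProductSpace ℝ V]
    [FiniteDimensional ℝ V]
    (n : ℕ) (hdim : Module.finrank ℝ V = 2 * n)
    (b : OrthonormalBasis (Fin (2 * n)) ℝ V)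
    (J : V →ₗ[ℝ] V)
    (A : V →ₗ[ℝ] V →ₗ[ℝ] V)
    (r F Ric : V →ₗ[ℝ] V)
    (L E : Submodule ℝ V)
    -- almost Hermitian structure, strict nearly Kähler condition
    (hJJ : ∀ x, J (J x) = -x)
    (hJiso : ∀ x y, ⟪J x, J y⟫ = ⟪x, y⟫)
    (hNK : ∀ x, A x x = 0)
    (hstrict : ∀ x, x ≠ 0 → ∃ y, A x y ≠ 0)
    (hAskew : ∀ x y z, ⟪A x y, z⟫ = -⟪A x z, y⟫)
    (hAJ : ∀ x y, A x (J y) = -J (A x y))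
    -- the splitting TM = L ⊕ E : orthogonal, J-stable, rank L = 2
    (hcompl : IsCompl L E)
    (horth : ∀ v ∈ L, ∀ x ∈ E, ⟪v, x⟫ = 0)
    (hJL : ∀ v ∈ L, J v ∈ L) (hJE : ∀ x ∈ E, J x ∈ E)
    (hrankL : Module.finrank ℝ L = 2)
    -- the frame is adapted to the splitting
    (inL : Fin (2 * n) → Prop) [DecidablePred inL]
    (hadapt : ∀ i, if inL i then b i ∈ L else b i ∈ E)
    -- definition of r and F, structural facts from Proposition 4.1
    (hr : ∀ x y, ⟪r x, y⟫ = ∑ i, ⟪A (b i) x, A (b i) y⟫)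
    (hF : ∀ x y, ⟪F x, y⟫
      = -(1/2 : ℝ) * ∑ i ∈ Finset.univ.filter inL, ⟪A x (A y (b i)), b i⟫)
    (k : ℝ) (hk : 0 < k)
    (hFE : ∀ x ∈ E, F x = (k / 4) • x)
    (hAE : ∀ x ∈ E, ∀ y ∈ E, A x y ∈ L)
    -- the eigenvalues of r on L and E
    (hrL : ∀ v ∈ L, r v = (k * (n - 1) / 2) • v)
    (hrE : ∀ x ∈ E, r x = k • x)
    -- the partial trace tensors r^L and r^E
    (rL rE : V →ₗ[ℝ] V)
    (hrsL : ∀ x y, ⟪rL x, y⟫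
      = -∑ i ∈ Finset.univ.filter inL, ⟪A x (A y (b i)), b i⟫)
    (hrsE : ∀ x y, ⟪rE x, y⟫
      = -∑ i ∈ Finset.univ.filter (fun i => ¬ inL i), ⟪A x (A y (b i)), b i⟫)
    -- the Ricci formula on each eigenbundle of r, and vanishing across them
    (hRicL : ∀ x ∈ L, ∀ y ∈ L,
      ⟪Ric x, y⟫ = (k * (n - 1) / 2) / 4 * ⟪x, y⟫
        + (1 / (k * (n - 1) / 2)) *
            ((k * (n - 1) / 2) * ⟪rL x, y⟫ + k * ⟪rE x, y⟫))
    (hRicE : ∀ x ∈ E, ∀ y ∈ E,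
      ⟪Ric x, y⟫ = k / 4 * ⟪x, y⟫
        + (1 / k) * ((k * (n - 1) / 2) * ⟪rL x, y⟫ + k * ⟪rE x, y⟫))
    (hRic0 : ∀ x ∈ L, ∀ y ∈ E, ⟪Ric x, y⟫ = 0)
    (hRicsymm : ∀ x y, ⟪Ric x, y⟫ = ⟪x, Ric y⟫) :
    (∀ v ∈ L, Ric v = (k * (n + 7) / 8) • v)
    ∧ (∀ x ∈ E, Ric x = (k * (n + 2) / 4) • x) :=
  reducibleNK_Ricci_eigenvalues_general V n hdim b J A r F Ric L E hJJ hNK hstrict hAskew hAJ hcompl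
    horth hJL hrankL inL hadapt hr hF k hk hFE hrL hrE rL rE hrsL hrsE hRicL hRicE hRic0 hRicsymm
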